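/- arXiv:2302.07595 — 3 statements merged into one kernel-verified Lean document; each statement's English description precedes it below -/
import Mathlib

section
/- Let u = x_{i_1}···x_{i_ℓ} ∈ M_{n,ℓ,t}. Then |M_{n,ℓ,t} \ L_t^i(u)| = Σ_{j=1}^{ℓ} C(a_j, j), where a_j = n - i_{ℓ-(j-1)} + j - 1 - Σ_{h=ℓ-(j-1)}^{ℓ-1} t_h, and this is the Macaulay (binomial) expansion of this cardinality with respect to ℓ: a_ℓ > a_{ℓ-1} > ... > a_p ≥ p and a_j < j for j < p, where p = min{j : a_j ≥ j}. -/
open Multiset Finset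

/-- A monomial in `K[x_1,…,x_n]` is encoded by the multiset of its variable
indices (each index lies in `[1, n]`).  `TSpread n d t u` says that `u` is a
t-spread monomial: its degree is at most `d`, its indices lie in `[1,n]`, and
consecutive indices `j_k ≤ j_{k+1}` of its sorted index list satisfy
`j_{k+1} - j_k ≥ t_k` (here `t 1 = t_1, …, t (d-1) = t_{d-1}`). -/
def TSpread (n d : ℕ) (t : ℕ → ℕ) (u : Multiset ℕ) : Prop :=
  u.card ≤ d ∧ (∀ i ∈ u, 1 ≤ i ∧ i ≤ n) ∧
    ∀ k : ℕ, k + 1 < u.card →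
      (u.sort (· ≤ ·)).getD k 0 + t (k + 1) ≤ (u.sort (· ≤ ·)).getD (k + 1) 0

/-- `Mset n d ℓ t` : the set `M_{n,ℓ,t}` of t-spread monomials of degree `ℓ`. -/
def Mset (n d ℓ : ℕ) (t : ℕ → ℕ) : Set (Multiset ℕ) :=
  {u | TSpread n d t u ∧ u.card = ℓ}

/-- the t-spread shadow `Shad_t(L) = {x_i w : w ∈ L, x_i w t-spread, i = 1..n}`. -/
def Shad (n d : ℕ) (t : ℕ → ℕ) (L : Set (Multiset ℕ)) : Set (Multiset ℕ) :=
  {v | ∃ w ∈ L, ∃ i, 1 ≤ i ∧ i ≤ n ∧ v = i ::ₘ w ∧ TSpread n d t v}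

/-- largest variable index dividing `u` (0 for the constant monomial). -/
def maxVar (u : Multiset ℕ) : ℕ := (u.sort (· ≤ ·)).getLastD 0

/-- `lexGE u v` : `u ≥_lex v` for monomials of equal degree, where the
lexicographic order is induced by `x_1 > x_2 > ⋯ > x_n`. -/
def lexGE (u v : Multiset ℕ) : Prop :=
  u = v ∨ List.Lex (· < ·) (u.sort (· ≤ ·)) (v.sort (· ≤ ·))

/-- `L` is a t-spread strongly stable set. -/
def StronglyStableSet (n d : ℕ) (t : ℕ → ℕ) (L : Set (Multiset ℕ)) : Prop :=
  ∀ u ∈ L, ∀ i ∈ u, ∀ j : ℕ, 1 ≤ j → j < i →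
    TSpread n d t (j ::ₘ u.erase i) → (j ::ₘ u.erase i) ∈ L

/-- `L` is a t-spread lex set (inside `M_{n,ℓ,t}`). -/
def LexSet (n d ℓ : ℕ) (t : ℕ → ℕ) (L : Set (Multiset ℕ)) : Prop :=
  ∀ u ∈ L, ∀ v ∈ Mset n d ℓ t, lexGE v u → v ∈ L

/-- `m_i(L)` : number of monomials of `L` with largest variable index `i`. -/
noncomputable def mEq (i : ℕ) (L : Set (Multiset ℕ)) : ℕ :=
  {u ∈ L | maxVar u = i}.ncard

/-- `m_{≤ i}(L)` : number of monomials of `L` with largest variable index `≤ i`. -/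
noncomputable def mLe (i : ℕ) (L : Set (Multiset ℕ)) : ℕ :=
  {u ∈ L | maxVar u ≤ i}.ncard

/-- `I` is (the set of monomials of) a monomial ideal of `K[x_1,…,x_n]`. -/
def MonIdeal (n : ℕ) (I : Set (Multiset ℕ)) : Prop :=
  (∀ u ∈ I, ∀ i ∈ u, 1 ≤ i ∧ i ≤ n) ∧
    ∀ u ∈ I, ∀ i : ℕ, 1 ≤ i → i ≤ n → (i ::ₘ u) ∈ I

/-- `I` is generated by t-spread monomials. -/
def TSpreadGen (n d : ℕ) (t : ℕ → ℕ) (I : Set (Multiset ℕ)) : Prop :=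
  ∀ u ∈ I, ∃ v ∈ I, TSpread n d t v ∧ v ≤ u

/-- The t-spread operator `a ↦ a^{(n,ℓ,t)}`:  if `a = Σ_{j=p}^{ℓ} C(a_j, j)` is
the Macaulay expansion of `a` with respect to `ℓ`, then
`tOp t_ℓ ℓ a = Σ_{j=p+1}^{ℓ+1} C(a_{j-1} + 1 - t_ℓ, j)`, computed greedily. -/
noncomputable def tOp (s : ℕ) : ℕ → ℕ → ℕ
  | 0, _ => 0
  | ℓ + 1, a =>
    if a = 0 then 0
    else
      (sSup {b | Nat.choose b (ℓ + 1) ≤ a} + 1 - s).choose (ℓ + 2) +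
        tOp s ℓ (a - Nat.choose (sSup {b | Nat.choose b (ℓ + 1) ≤ a}) (ℓ + 1))

/-- The graded Betti number `β_{i,j}(I)` of a t-spread strongly stable ideal,
via the Eliahou–Kervaire-type formula
`β_{i,i+q}(I) = Σ_{u ∈ G(I)_q} C(max(u) - 1 - Σ_{h=1}^{q-1} t_h, i)`. -/
noncomputable def betti (t : ℕ → ℕ) (I : Set (Multiset ℕ)) (i j : ℕ) : ℕ :=
  ∑ᶠ u ∈ {u ∈ I | u.card = j - i ∧ ∀ v ∈ I, v ≤ u → v = u},
    (maxVar u - 1 - ∑ h ∈ Finset.Icc 1 (j - i - 1), t h).choose i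

/-!
Identify a monomial with its sorted list of indices. Since `x_1 > ⋯ > x_n`, the monomials of
`M_{n,ℓ,t}` outside `L_t^i(u)` are those whose t-spread index list is lexicographically *larger*
than `(i_1, …, i_ℓ)`. Grouping them by the first position `k` at which they differ from it,
those with a larger `k`-th index are the t-spread lists of length `j = ℓ - k + 1` in the variables
`x_{i_k + 1}, …, x_n`, preceded by `i_1, …, i_{k-1}`. Counting t-spread lists by their first entry
and summing with the hockey-stick identity gives `C(a_j, j)` of them. The Macaulay inequalities
`a_j < a_{j+1}` come from `i_k + t_k ≤ i_{k+1}`.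
-/

namespace TSpreadLex

lemma choose_sub_succ_add_choose {m : ℕ} (hm : 1 ≤ m) (c x : ℕ) :
    (c - (x + 1)).choose m + (c - (x + 1)).choose (m + 1) = (c - x).choose (m + 1) := by
  rcases lt_or_ge x c with hxc | hcx
  · rw [show c - x = c - (x + 1) + 1 by omega, Nat.choose_succ_succ']
  · simp [Nat.sub_eq_zero_of_le hcx, Nat.sub_eq_zero_of_le (hcx.trans x.le_succ),
      Nat.choose_eq_zero_of_lt (by omega : 0 < m)]

lemma sum_Icc_choose_sub_succ_add {m : ℕ} (hm : 1 ≤ m) (c : ℕ) {a b : ℕ} (hab : a ≤ b) :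
    ∑ j ∈ Finset.Icc a b, (c - (j + 1)).choose m + (c - (b + 1)).choose (m + 1)
      = (c - a).choose (m + 1) := by
  induction b, hab using Nat.le_induction with
  | base => simpa using choose_sub_succ_add_choose hm c a
  | succ b hab ih =>
    rw [sum_Icc_succ_top (by omega), add_assoc, choose_sub_succ_add_choose hm, ih]

/-- The hockey-stick identity, summed downwards. -/
lemma sum_Icc_choose_sub_succ {m : ℕ} (hm : 1 ≤ m) {a b c : ℕ} (hc : c ≤ b + m + 1) :
    ∑ j ∈ Finset.Icc a b, (c - (j + 1)).choose m = (c - a).choose (m + 1) := by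
  rcases le_or_gt a b with hab | hba
  · have h := sum_Icc_choose_sub_succ_add hm c hab
    rwa [Nat.choose_eq_zero_of_lt (by omega : c - (b + 1) < m + 1), add_zero] at h
  · rw [Finset.Icc_eq_empty (by omega), sum_empty, Nat.choose_eq_zero_of_lt (by omega)]

lemma disjoint_image_cons {α : Type*} [DecidableEq α] {i j : α} (hij : i ≠ j)
    (S T : Finset (List α)) :
    Disjoint (S.image (i :: ·)) (T.image (j :: ·)) := by
  simp only [Finset.disjoint_left, Finset.mem_image]
  rintro _ ⟨l, -, rfl⟩ ⟨l', -, h⟩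
  exact hij (List.cons_eq_cons.1 h).1.symm

/-- Sorted index lists of t-spread monomials of degree `m` in the variables `x_a, …, x_n`;
the gap after the `k`-th entry is `t k`, with `k` counted from `1`. -/
def spreadLists (n : ℕ) : ℕ → (ℕ → ℕ) → ℕ → Finset (List ℕ)
  | 0, _, _ => {[]}
  | m + 1, t, a =>
    (Finset.Icc a n).biUnion fun j =>
      (spreadLists n m (fun h => t (h + 1)) (j + t 1)).image (j :: ·)

variable {n : ℕ}

lemma mem_spreadLists_succ {m : ℕ} {t : ℕ → ℕ} {a : ℕ} {l : List ℕ} :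
    l ∈ spreadLists n (m + 1) t a ↔
      ∃ j ∈ Finset.Icc a n, ∃ l' ∈ spreadLists n m (fun h => t (h + 1)) (j + t 1), j :: l' = l := by
  simp only [spreadLists, mem_biUnion, mem_image]

lemma le_of_mem_spreadLists {m : ℕ} {t : ℕ → ℕ} {a : ℕ} {l : List ℕ}
    (hl : l ∈ spreadLists n m t a) {i : ℕ} (hi : i ∈ l) : a ≤ i := by
  induction m generalizing t a l with
  | zero => simp_all [spreadLists]
  | succ m ih =>
    obtain ⟨j, hj, l', hl', rfl⟩ := mem_spreadLists_succ.1 hl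
    rcases List.mem_cons.1 hi with rfl | hi
    · exact (Finset.mem_Icc.1 hj).1
    · exact (Finset.mem_Icc.1 hj).1.trans (le_of_add_le_left (ih hl' hi))

lemma pairwise_of_mem_spreadLists {m : ℕ} {t : ℕ → ℕ} {a : ℕ} {l : List ℕ}
    (hl : l ∈ spreadLists n m t a) : l.Pairwise (· ≤ ·) := by
  induction m generalizing t a l with
  | zero => simp_all [spreadLists]
  | succ m ih =>
    obtain ⟨j, -, l', hl', rfl⟩ := mem_spreadLists_succ.1 hl
    exact List.pairwise_cons.2
      ⟨fun i hi => le_of_add_le_left (le_of_mem_spreadLists hl' hi), ih hl'⟩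

lemma mem_spreadLists_iff {m : ℕ} {t : ℕ → ℕ} {a : ℕ} {l : List ℕ} :
    l ∈ spreadLists n m t a ↔
      l.length = m ∧ (∀ i ∈ l, i ≤ n) ∧
      (∀ k, k + 1 < m → l.getD k 0 + t (k + 1) ≤ l.getD (k + 1) 0) ∧
      (0 < m → a ≤ l.getD 0 0) := by
  induction m generalizing t a l with
  | zero => simp +contextual [spreadLists, List.length_eq_zero_iff]
  | succ m ih =>
    rw [mem_spreadLists_succ]
    constructor
    · rintro ⟨j, hj, l', hl', rfl⟩
      obtain ⟨hlen, hle, hgap, hhead⟩ := ih.1 hl'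
      refine ⟨by simp [hlen], ?_, ?_, fun _ => by simpa using (Finset.mem_Icc.1 hj).1⟩
      · rintro i (_ | ⟨_, hi⟩)
        exacts [(Finset.mem_Icc.1 hj).2, hle i hi]
      · rintro (_ | k) hk
        exacts [by simpa using hhead (by omega), by simpa using hgap k (by omega)]
    · rintro ⟨hlen, hle, hgap, hhead⟩
      obtain _ | ⟨j, l'⟩ := l
      · simp at hlen
      refine ⟨j, Finset.mem_Icc.2 ⟨by simpa using hhead (by omega), hle j List.mem_cons_self⟩,
        l', ih.2 ⟨by simpa using hlen, fun i hi => hle i (List.mem_cons_of_mem _ hi),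
          fun k hk => by simpa using hgap (k + 1) (by omega),
          fun _ => by simpa using hgap 0 (by omega)⟩, rfl⟩

lemma card_spreadLists (m : ℕ) (t : ℕ → ℕ) (a : ℕ) :
    (spreadLists n m t a).card
      = ((n + m) - (a + ∑ h ∈ range (m - 1), t (h + 1))).choose m := by
  induction m generalizing t a with
  | zero => simp [spreadLists]
  | succ m ih =>
    rw [spreadLists, card_biUnion fun i _ j _ hij => disjoint_image_cons hij _ _]
    simp only [card_image_of_injective _ List.cons_injective, ih]
    obtain _ | k := m
    · simp
    · set S := ∑ h ∈ range k, t (h + 1 + 1)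
      have hsum : ∑ h ∈ range (k + 1), t (h + 1) = t 1 + S := by
        rw [sum_range_succ', add_comm]
      simp only [Nat.add_sub_cancel, hsum]
      rw [show n + (k + 1 + 1) - (a + (t 1 + S)) = n + (k + 2) - (t 1 + S) - a by omega,
        ← sum_Icc_choose_sub_succ (b := n) (by omega) (by omega)]
      exact sum_congr rfl fun x _ => by congr 1; omega

lemma filter_lex_cons_spreadLists {m : ℕ} {t : ℕ → ℕ} {a j₀ : ℕ} (haj : a ≤ j₀) (hjn : j₀ ≤ n)
    (s : List ℕ) :
    (spreadLists n (m + 1) t a).filter (List.Lex (· < ·) (j₀ :: s))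
      = ((spreadLists n m (fun h => t (h + 1)) (j₀ + t 1)).filter
          (List.Lex (· < ·) s)).image (j₀ :: ·) ∪ spreadLists n (m + 1) t (j₀ + 1) := by
  ext l
  simp only [Finset.mem_filter, Finset.mem_union, Finset.mem_image, mem_spreadLists_succ,
    Finset.mem_Icc]
  constructor
  · rintro ⟨⟨j, hj, l', hl', rfl⟩, hlex⟩
    rcases List.cons_lex_cons_iff.1 hlex with hlt | ⟨rfl, hlex'⟩
    · exact Or.inr ⟨j, ⟨hlt, hj.2⟩, l', hl', rfl⟩
    · exact Or.inl ⟨l', ⟨hl', hlex'⟩, rfl⟩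
  · rintro (⟨l', ⟨hl', hlex'⟩, rfl⟩ | ⟨j, hj, l', hl', rfl⟩)
    · exact ⟨⟨j₀, ⟨haj, hjn⟩, l', hl', rfl⟩, List.Lex.cons hlex'⟩
    · exact ⟨⟨j, ⟨by omega, hj.2⟩, l', hl', rfl⟩, List.Lex.rel hj.1⟩

lemma card_filter_lex_spreadLists {m : ℕ} {t : ℕ → ℕ} {a : ℕ} {s : List ℕ}
    (hs : s ∈ spreadLists n m t a) :
    ((spreadLists n m t a).filter (List.Lex (· < ·) s)).card
      = ∑ j ∈ range m,
          ((n + j) - (s.getD (m - 1 - j) 0 + ∑ h ∈ range j, t (m - j + h))).choose (j + 1) := by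
  induction m generalizing t a s with
  | zero =>
    rw [spreadLists, Finset.mem_singleton] at hs
    subst hs
    simp [spreadLists, Finset.filter_singleton]
  | succ m ih =>
    obtain ⟨j₀, hj₀, s', hs', rfl⟩ := mem_spreadLists_succ.1 hs
    obtain ⟨haj, hjn⟩ := Finset.mem_Icc.1 hj₀
    have hdisj : Disjoint (((spreadLists n m (fun h => t (h + 1)) (j₀ + t 1)).filter
        (List.Lex (· < ·) s')).image (j₀ :: ·)) (spreadLists n (m + 1) t (j₀ + 1)) := by
      refine Finset.disjoint_left.2 fun l hl hl' => ?_
      obtain ⟨l', -, rfl⟩ := Finset.mem_image.1 hl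
      have := le_of_mem_spreadLists hl' List.mem_cons_self
      omega
    rw [filter_lex_cons_spreadLists haj hjn, card_union_of_disjoint hdisj,
      card_image_of_injective _ List.cons_injective, ih hs', card_spreadLists, sum_range_succ]
    congr 1
    · refine Finset.sum_congr rfl fun j hj => ?_
      have hj : j < m := Finset.mem_range.1 hj
      rw [show m + 1 - 1 - j = m - 1 - j + 1 by omega, List.getD_cons_succ]
      congr 3
      exact Finset.sum_congr rfl fun h _ => by congr 1; omega
    · rw [Nat.add_sub_cancel, Nat.sub_self, List.getD_cons_zero,
        Finset.sum_congr rfl fun h _ => show t (m + 1 - m + h) = t (h + 1) by congr 1; omega]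
      congr 1
      omega

lemma sort_coe_of_pairwise {α : Type*} [LinearOrder α] {l : List α} (hl : l.Pairwise (· ≤ ·)) :
    (l : Multiset α).sort (· ≤ ·) = l := by
  rw [Multiset.coe_sort]
  exact List.mergeSort_eq_self _ (by simpa using hl)

lemma ncard_setOf_sort_mem {α : Type*} [LinearOrder α] {F : Finset (List α)}
    (hF : ∀ l ∈ F, l.Pairwise (· ≤ ·)) :
    {v : Multiset α | v.sort (· ≤ ·) ∈ F}.ncard = F.card := by
  have himage : {v : Multiset α | v.sort (· ≤ ·) ∈ F} = (↑) '' (F : Set (List α)) := by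
    ext v
    constructor
    · exact fun hv => ⟨_, hv, Multiset.sort_eq _ _⟩
    · rintro ⟨l, hl, rfl⟩
      simpa [sort_coe_of_pairwise (hF l hl)] using hl
  rw [himage, Set.InjOn.ncard_image, Set.ncard_coe_finset]
  intro l₁ h₁ l₂ h₂ h
  rw [← sort_coe_of_pairwise (hF l₁ h₁), ← sort_coe_of_pairwise (hF l₂ h₂)]
  exact congrArg (Multiset.sort · (· ≤ ·)) h

lemma lexGE_iff_not_lex (u v : Multiset ℕ) :
    lexGE v u ↔ ¬ List.Lex (· < ·) (u.sort (· ≤ ·)) (v.sort (· ≤ ·)) := by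
  constructor
  · rintro (rfl | h) h'
    exacts [asymm h' h', asymm h h']
  · intro h
    rcases trichotomous_of (List.Lex (· < ·)) (v.sort (· ≤ ·)) (u.sort (· ≤ ·)) with
      hlt | heq | hgt
    · exact Or.inr hlt
    · exact Or.inl (by rw [← Multiset.sort_eq v (· ≤ ·), heq, Multiset.sort_eq])
    · exact absurd hgt h

lemma mem_Mset_iff {d ℓ : ℕ} {t : ℕ → ℕ} (hℓd : ℓ ≤ d) {v : Multiset ℕ} :
    v ∈ Mset n d ℓ t ↔ v.sort (· ≤ ·) ∈ spreadLists n ℓ t 1 := by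
  constructor
  · rintro ⟨⟨-, hmem, hgap⟩, rfl⟩
    refine mem_spreadLists_iff.2 ⟨Multiset.length_sort _,
      fun i hi => (hmem i ((Multiset.mem_sort _).1 hi)).2, hgap, fun h0 => ?_⟩
    rw [List.getD_eq_getElem _ _ (by simpa using h0)]
    exact (hmem _ ((Multiset.mem_sort _).1 (List.getElem_mem _))).1
  · intro h
    obtain ⟨hlen, hle, hgap, -⟩ := mem_spreadLists_iff.1 h
    rw [Multiset.length_sort] at hlen
    subst hlen
    exact ⟨⟨hℓd, fun i hi => ⟨le_of_mem_spreadLists h ((Multiset.mem_sort _).2 hi),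
      hle i ((Multiset.mem_sort _).2 hi)⟩, hgap⟩, rfl⟩

lemma ncard_Mset_diff_lexGE {d ℓ : ℕ} {t : ℕ → ℕ} (hℓd : ℓ ≤ d) (u : Multiset ℕ) :
    (Mset n d ℓ t \ {v ∈ Mset n d ℓ t | lexGE v u}).ncard
      = ((spreadLists n ℓ t 1).filter (List.Lex (· < ·) (u.sort (· ≤ ·)))).card := by
  rw [← ncard_setOf_sort_mem fun l hl => pairwise_of_mem_spreadLists (Finset.mem_filter.1 hl).1]
  congr 1
  ext v
  simp only [Set.mem_sdiff, Set.mem_ofPred_eq, Finset.mem_filter, mem_Mset_iff hℓd,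
    lexGE_iff_not_lex]
  tauto

lemma sort_map_Icc_of_le_succ {idx : ℕ → ℕ} {ℓ : ℕ}
    (hmono : ∀ k, 1 ≤ k → k < ℓ → idx k ≤ idx (k + 1)) :
    ((Finset.Icc 1 ℓ).val.map idx).sort (· ≤ ·) = (List.range' 1 ℓ).map idx := by
  have hmon : MonotoneOn idx (Set.Icc 1 ℓ) :=
    monotoneOn_of_le_succ Set.ordConnected_Icc fun k _ hk hk1 => by
      simp only [Set.mem_Icc, Order.succ_eq_add_one] at hk hk1 ⊢
      exact hmono k hk.1 (by omega)
  rw [Nat.Icc_eq_range', Nat.add_sub_cancel]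
  refine sort_coe_of_pairwise (List.pairwise_map.2 ((List.pairwise_lt_range').imp_of_mem ?_))
  intro a b ha hb hab
  rw [List.mem_range'_1] at ha hb
  exact hmon ⟨ha.1, by omega⟩ ⟨hb.1, by omega⟩ hab.le

/-- The exponent `a_j` of the statement, for `u = x_{idx 1} ⋯ x_{idx ℓ}`. -/
def macaulayExponent (n ℓ : ℕ) (t idx : ℕ → ℕ) (j : ℕ) : ℕ :=
  n - idx (ℓ - (j - 1)) + (j - 1) - ∑ h ∈ Finset.Icc (ℓ - (j - 1)) (ℓ - 1), t h

lemma card_filter_lex_spreadLists_map_range' {ℓ : ℕ} {t idx : ℕ → ℕ}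
    (hmem : (List.range' 1 ℓ).map idx ∈ spreadLists n ℓ t 1) :
    ((spreadLists n ℓ t 1).filter (List.Lex (· < ·) ((List.range' 1 ℓ).map idx))).card
      = ∑ j ∈ Finset.Icc 1 ℓ, (macaulayExponent n ℓ t idx j).choose j := by
  rw [card_filter_lex_spreadLists hmem, ← Finset.Ico_add_one_right_eq_Icc,
    Finset.sum_Ico_eq_sum_range, Nat.add_sub_cancel]
  refine Finset.sum_congr rfl fun j hj => ?_
  have hj : j < ℓ := Finset.mem_range.1 hj
  have hidx : ((List.range' 1 ℓ).map idx).getD (ℓ - 1 - j) 0 = idx (ℓ - j) := by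
    simp only [List.getD_eq_getElem?_getD, List.getElem?_map, List.getElem?_range',
      show ℓ - 1 - j < ℓ by omega, Option.map_some, Option.getD_some]
    congr 1
    omega
  have hn : idx (ℓ - j) ≤ n := (mem_spreadLists_iff.1 hmem).2.1 _
    (List.mem_map.2 ⟨ℓ - j, List.mem_range'_1.2 ⟨by omega, by omega⟩, rfl⟩)
  have hgap : ∑ h ∈ Finset.Icc (ℓ - j) (ℓ - 1), t h = ∑ h ∈ Finset.range j, t (ℓ - j + h) := by
    rw [← Finset.Ico_add_one_right_eq_Icc, Nat.sub_add_cancel (by omega),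
      Finset.sum_Ico_eq_sum_range, Nat.sub_sub_self hj.le]
  rw [macaulayExponent, hidx, Nat.add_sub_cancel_left, hgap, add_comm 1 j]
  congr 1
  omega

lemma macaulayExponent_lt_succ {n ℓ j : ℕ} {t idx : ℕ → ℕ} (hj : 1 ≤ j) (hjℓ : j < ℓ)
    (hgap : idx (ℓ - j) + t (ℓ - j) ≤ idx (ℓ - j + 1)) (hjA : j ≤ macaulayExponent n ℓ t idx j) :
    macaulayExponent n ℓ t idx j < macaulayExponent n ℓ t idx (j + 1) ∧
      j + 1 ≤ macaulayExponent n ℓ t idx (j + 1) := by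
  simp only [macaulayExponent] at hjA ⊢
  rw [show ℓ - (j - 1) = ℓ - j + 1 by omega] at hjA ⊢
  rw [Nat.add_sub_cancel, Finset.Icc_eq_cons_Ioc (show ℓ - j ≤ ℓ - 1 by omega),
    Finset.sum_cons, ← Finset.Icc_add_one_left_eq_Ioc]
  omega

end TSpreadLex

open TSpreadLex

theorem stmt10_general (n d ℓ : ℕ) (t : ℕ → ℕ) (hℓd : ℓ ≤ d)
    (idx : ℕ → ℕ) (u : Multiset ℕ)
    (hu : u = (Finset.Icc 1 ℓ).val.map idx)
    (hmono : ∀ k, 1 ≤ k → k < ℓ → idx k + t k ≤ idx (k + 1))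
    (huM : u ∈ Mset n d ℓ t)
    (A : ℕ → ℕ)
    (hA : ∀ j ∈ Finset.Icc 1 ℓ,
      A j = n - idx (ℓ - (j - 1)) + (j - 1) - ∑ h ∈ Finset.Icc (ℓ - (j - 1)) (ℓ - 1), t h) :
    (Mset n d ℓ t \ {v ∈ Mset n d ℓ t | lexGE v u}).ncard
        = ∑ j ∈ Finset.Icc 1 ℓ, (A j).choose j ∧
      ∀ j, 1 ≤ j → j < ℓ → j ≤ A j → A j < A (j + 1) ∧ j + 1 ≤ A (j + 1) := by
  have hsort : u.sort (· ≤ ·) = (List.range' 1 ℓ).map idx := by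
    rw [hu]
    exact sort_map_Icc_of_le_succ fun k hk hkℓ => le_of_add_le_left (hmono k hk hkℓ)
  have hmem := (mem_Mset_iff hℓd).1 huM
  rw [hsort] at hmem
  have hA' : ∀ j ∈ Finset.Icc 1 ℓ, A j = macaulayExponent n ℓ t idx j := hA
  refine ⟨?_, fun j hj hjℓ hjA => ?_⟩
  · rw [ncard_Mset_diff_lexGE hℓd, hsort, card_filter_lex_spreadLists_map_range' hmem]
    exact Finset.sum_congr rfl fun j hj => by rw [hA' j hj]
  · have hjmem : j ∈ Finset.Icc 1 ℓ := Finset.mem_Icc.2 ⟨hj, hjℓ.le⟩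
    rw [hA' j hjmem] at hjA
    rw [hA' j hjmem, hA' (j + 1) (Finset.mem_Icc.2 ⟨by omega, hjℓ⟩)]
    exact macaulayExponent_lt_succ hj hjℓ (hmono (ℓ - j) (by omega) (by omega)) hjA

/-- for `u = x_{i_1}⋯x_{i_ℓ} ∈ M_{n,ℓ,t}`,
`|M_{n,ℓ,t} \ L_t^i(u)| = Σ_{j=1}^{ℓ} C(a_j, j)` with
`a_j = n - i_{ℓ-(j-1)} + j - 1 - Σ_{h=ℓ-(j-1)}^{ℓ-1} t_h`, and this is the
Macaulay expansion of that cardinality with respect to `ℓ`. -/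
theorem stmt10 (n d ℓ : ℕ) (t : ℕ → ℕ) (hd : 2 ≤ d) (hℓ1 : 1 ≤ ℓ) (hℓd : ℓ ≤ d)
    (idx : ℕ → ℕ) (u : Multiset ℕ)
    (hu : u = (Finset.Icc 1 ℓ).val.map idx)
    (hrange : ∀ k ∈ Finset.Icc 1 ℓ, 1 ≤ idx k ∧ idx k ≤ n)
    (hmono : ∀ k, 1 ≤ k → k < ℓ → idx k + t k ≤ idx (k + 1))
    (huM : u ∈ Mset n d ℓ t)
    (A : ℕ → ℕ)
    (hA : ∀ j ∈ Finset.Icc 1 ℓ,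
      A j = n - idx (ℓ - (j - 1)) + (j - 1) - ∑ h ∈ Finset.Icc (ℓ - (j - 1)) (ℓ - 1), t h) :
    (Mset n d ℓ t \ {v ∈ Mset n d ℓ t | lexGE v u}).ncard
        = ∑ j ∈ Finset.Icc 1 ℓ, (A j).choose j ∧
      ∀ j, 1 ≤ j → j < ℓ → j ≤ A j → A j < A (j + 1) ∧ j + 1 ≤ A (j + 1) :=
  stmt10_general n d ℓ t hℓd idx u hu hmono huM A hA
end

section
/- Let u = x_{i_1}···x_{i_ℓ} = min_lex L for a t-spread lex set L = L_t^i(u) ⊆ M_{n,ℓ,t} with ℓ < d. Then the lex-minimal element of Shad_t(L) is ũ = (∏_{h=1}^{ℓ-r} x_{i_h})·(∏_{h=1}^{r+1} x_{n - Σ_{p=ℓ-(r-h)}^{ℓ} t_p}), where r = min{s ∈ [0,ℓ] : n - i_ℓ + Σ_{h=1}^{s}(i_{ℓ-(h-1)} - i_{ℓ-h} - t_{ℓ-h}) ≥ t_ℓ} (with conventions i_0 = t_0 = 0). -/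
/-!
Write `u = x_{i_1} ⋯ x_{i_ℓ}` and `S_k = t_k + ⋯ + t_ℓ`. The candidate is `ũ = x_{c_1} ⋯ x_{c_{ℓ+1}}`
with `c_k = i_k` for `k ≤ ℓ - r` and `c_k = n - S_k` otherwise; as `c_{ℓ+1} = n`, `ũ = x_n · w`
with `w = x_{c_1} ⋯ x_{c_ℓ}`.

The sum defining `r` telescopes, so the condition for `s` reads `i_{ℓ-s} + S_{ℓ-s} ≤ n`.
For `s = r` it makes the sequence `c` t-spread; for `s = r - 1` its failure gives
`c_{ℓ-r+1} < i_{ℓ-r+1}`, so `w ≥_lex u` and `ũ ∈ Shad_t(L)`.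

Conversely let `v = x_a · w'` with `w' ≥_lex u`, and suppose the sorted index list of `v` first
exceeds `c` at position `j`. If `j ≤ ℓ - r`, inserting `a` into `w'` can only lower each entry of
its sorted list, so `v_j ≤ w'_j ≤ i_j = c_j`. If `j > ℓ - r`, `v` being t-spread of degree `ℓ + 1`
with indices `≤ n` forces `v_j ≤ n - S_j = c_j`. Either way this is a contradiction.
-/

open Multiset Finset

theorem lexGE_iff_not_lex {u v : Multiset ℕ} :
    lexGE u v ↔ ¬ List.Lex (· < ·) (v.sort (· ≤ ·)) (u.sort (· ≤ ·)) := by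
  have hinj : u.sort (· ≤ ·) = v.sort (· ≤ ·) ↔ u = v :=
    ⟨fun h => by rw [← Multiset.sort_eq u (· ≤ ·), h, Multiset.sort_eq], fun h => h ▸ rfl⟩
  rw [List.not_lex_lt, List.le_iff_lt_or_eq, hinj, or_comm, lexGE, List.lex_lt]

theorem Multiset.sort_cons_eq_orderedInsert (a : ℕ) (s : Multiset ℕ) :
    (a ::ₘ s).sort (· ≤ ·) = (s.sort (· ≤ ·)).orderedInsert (· ≤ ·) a := by
  induction s using Quotient.inductionOn with
  | h l => simp [List.mergeSort_eq_insertionSort]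

theorem List.getElem_orderedInsert_le {l : List ℕ} (hl : l.Pairwise (· ≤ ·)) (a k : ℕ)
    (hk : k < l.length) :
    (l.orderedInsert (· ≤ ·) a)[k]'(by rw [List.orderedInsert_length]; omega) ≤ l[k] := by
  induction l generalizing k with
  | nil => simp at hk
  | cons b l ih =>
    by_cases hab : a ≤ b
    · rcases k with _ | k
      · simp [hab]
      · simpa [hab] using List.pairwise_iff_getElem.1 hl k (k + 1) (by omega) hk (by omega)
    · rcases k with _ | k
      · simp [hab]
      · simpa [hab] using ih hl.of_cons k (by simpa using hk)

theorem List.getElem_le_getElem_of_not_lex {E U : List ℕ} (h : ¬ List.Lex (· < ·) U E) (j : ℕ)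
    (hjE : j < E.length) (hjU : j < U.length) (hpre : ∀ k (hk : k < j), U[k] ≤ E[k]) :
    E[j] ≤ U[j] := by
  rcases List.le_iff_exists.1 (List.not_lex_lt.1 h) with hEU | ⟨i, hiE, hiU, heq, hlt⟩
  · exact ((List.getElem_of_eq hEU hjE).trans List.getElem_take).le
  · rcases lt_trichotomy i j with hij | rfl | hij
    · exact absurd (hpre i hij) (not_le.2 hlt)
    · exact hlt.le
    · exact (heq j hij).le

def SpreadOn (t : ℕ → ℕ) (m : ℕ) (f : ℕ → ℕ) : Prop :=
  ∀ k, 1 ≤ k → k < m → f k + t k ≤ f (k + 1)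

theorem SpreadOn.monotoneOn {t f : ℕ → ℕ} {m : ℕ} (hf : SpreadOn t m f) :
    MonotoneOn f (Set.Icc 1 m) :=
  monotoneOn_of_le_succ Set.ordConnected_Icc fun k _ hk hk' => by
    rw [Order.succ_eq_add_one] at hk' ⊢
    exact le_of_add_le_left (hf k hk.1 (by simp at hk'; omega))

theorem val_map_Icc_one (f : ℕ → ℕ) (m : ℕ) :
    (Finset.Icc 1 m).val.map f = ((List.range' 1 m).map f : Multiset ℕ) := by
  simp [Nat.Icc_eq_range']

theorem sort_map_Icc {f : ℕ → ℕ} {m : ℕ} (hf : MonotoneOn f (Set.Icc 1 m)) :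
    ((Finset.Icc 1 m).val.map f).sort (· ≤ ·) = (List.range' 1 m).map f := by
  rw [val_map_Icc_one, Multiset.coe_sort]
  refine List.mergeSort_eq_self _ (List.pairwise_map.2 ?_)
  refine (List.pairwise_lt_range' (s := 1) (n := m)).imp_of_mem fun ha hb hab => ?_
  simp only [List.mem_range'_1] at ha hb
  exact hf ⟨ha.1, by omega⟩ ⟨hb.1, by omega⟩ hab.le

theorem tSpread_map_Icc {n d m : ℕ} {t f : ℕ → ℕ} (hm : m ≤ d)
    (hbd : ∀ k ∈ Finset.Icc 1 m, 1 ≤ f k ∧ f k ≤ n) (hf : SpreadOn t m f) :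
    TSpread n d t ((Finset.Icc 1 m).val.map f) := by
  refine ⟨by simpa using hm, fun i hi => ?_, fun k hk => ?_⟩
  · obtain ⟨k, hk, rfl⟩ := Multiset.mem_map.1 hi
    exact hbd k hk
  · simp only [Multiset.card_map, card_val, Nat.card_Icc, add_tsub_cancel_right] at hk
    rw [sort_map_Icc hf.monotoneOn, List.getD_eq_getElem _ _ (by simp; omega),
      List.getD_eq_getElem _ _ (by simp; omega)]
    simpa [List.getElem_range', add_comm 1] using hf (k + 1) (by omega) (by omega)

theorem lexGE_map_Icc {f g : ℕ → ℕ} {m j : ℕ} (hf : MonotoneOn f (Set.Icc 1 m))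
    (hg : MonotoneOn g (Set.Icc 1 m)) (hj : j ∈ Finset.Icc 1 m)
    (heq : ∀ k, 1 ≤ k → k < j → f k = g k) (hlt : f j < g j) :
    lexGE ((Finset.Icc 1 m).val.map f) ((Finset.Icc 1 m).val.map g) := by
  rw [lexGE, sort_map_Icc hf, sort_map_Icc hg, List.lex_lt]
  simp only [Finset.mem_Icc] at hj
  refine Or.inr (List.lt_iff_exists.2 (Or.inr ⟨j - 1, by simp; omega, by simp; omega, ?_, ?_⟩))
  · intro k hk
    simpa [List.getElem_range'] using heq (1 + k) (by omega) (by omega)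
  · simpa [List.getElem_range', show 1 + (j - 1) = j by omega] using hlt

theorem getElem_sort_map_Icc {f : ℕ → ℕ} {m : ℕ} (hf : MonotoneOn f (Set.Icc 1 m)) {k : ℕ}
    (hk : k < m) :
    (((Finset.Icc 1 m).val.map f).sort (· ≤ ·))[k]'(by simpa using hk) = f (k + 1) := by
  rw [List.getElem_of_eq (sort_map_Icc hf)]
  simp [List.getElem_range', add_comm]

theorem val_map_Icc_succ (f : ℕ → ℕ) (m : ℕ) :
    (Finset.Icc 1 (m + 1)).val.map f = f (m + 1) ::ₘ (Finset.Icc 1 m).val.map f := by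
  simp [val_map_Icc_one, List.range'_concat, add_comm]

theorem TSpread.getElem_sort_add_sum_le {n d m : ℕ} {t : ℕ → ℕ} {v : Multiset ℕ}
    (hv : TSpread n d t v) (hcard : Multiset.card v = m + 1) {j : ℕ} (hj : j ≤ m) :
    (v.sort (· ≤ ·))[j]'(by simp [hcard]; omega) + ∑ p ∈ Finset.Icc (j + 1) m, t p ≤ n := by
  obtain ⟨-, hbd, hspread⟩ := hv
  have hlen : (v.sort (· ≤ ·)).length = m + 1 := by simp [hcard]
  have hchain : ∀ k, j ≤ k → k ≤ m → (v.sort (· ≤ ·)).getD j 0 +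
      ∑ p ∈ Finset.Icc (j + 1) k, t p ≤ (v.sort (· ≤ ·)).getD k 0 := by
    intro k hjk hkm
    induction k, hjk using Nat.le_induction with
    | base => simp
    | succ k hjk ih =>
      rw [Finset.sum_Icc_succ_top (by omega)]
      have := hspread k (by omega)
      have := ih (by omega)
      omega
  have hlast : (v.sort (· ≤ ·))[m] ≤ n := (hbd _ ((Multiset.mem_sort _).1 (List.getElem_mem _))).2
  have hjm := hchain m hj le_rfl
  rw [List.getD_eq_getElem _ _ (by omega), List.getD_eq_getElem _ _ (by omega)] at hjm
  exact hjm.trans hlast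

theorem getElem_sort_cons_le_of_lexGE {w u : Multiset ℕ} (hwu : lexGE w u)
    (hcard : Multiset.card w = Multiset.card u) (a : ℕ) {j : ℕ} (hj : j < Multiset.card u)
    (hpre : ∀ k (hk : k < j), ((a ::ₘ w).sort (· ≤ ·))[k]'(by simp; omega) =
      (u.sort (· ≤ ·))[k]'(by simp; omega)) :
    ((a ::ₘ w).sort (· ≤ ·))[j]'(by simp; omega) ≤ (u.sort (· ≤ ·))[j]'(by simp; omega) := by
  have hle : ∀ k (hk : k < Multiset.card w),
      ((a ::ₘ w).sort (· ≤ ·))[k]'(by simp; omega) ≤ (w.sort (· ≤ ·))[k]'(by simpa) := by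
    intro k hk
    rw [List.getElem_of_eq (Multiset.sort_cons_eq_orderedInsert a w)]
    exact List.getElem_orderedInsert_le (Multiset.pairwise_sort _ _) a k (by simpa)
  refine (hle j (by omega)).trans (List.getElem_le_getElem_of_not_lex (lexGE_iff_not_lex.1 hwu)
    j _ _ fun k hk => ?_)
  rw [← hpre k hk]
  exact hle k (by omega)

theorem Finset.sum_Icc_eq_add_sum_Icc_succ {M : Type*} [AddCommMonoid M] (f : ℕ → M)
    {a b : ℕ} (h : a ≤ b) : ∑ p ∈ Finset.Icc a b, f p = f a + ∑ p ∈ Finset.Icc (a + 1) b, f p := by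
  rw [← Finset.add_sum_Ioc_eq_sum_Icc h, Finset.Icc_add_one_left_eq_Ioc]

theorem sum_Icc_sub_telescope {f g : ℕ → ℕ} {ℓ s : ℕ} (hs : s ≤ ℓ)
    (hfg : ∀ k < ℓ, f k + g k ≤ f (k + 1)) :
    ∑ h ∈ Finset.Icc 1 s, (f (ℓ - (h - 1)) - f (ℓ - h) - g (ℓ - h)) + f (ℓ - s) +
      ∑ p ∈ Finset.Ico (ℓ - s) ℓ, g p = f ℓ := by
  induction s with
  | zero => simp
  | succ s ih =>
    rw [Finset.sum_Icc_succ_top (by omega), Finset.sum_eq_sum_Ico_succ_bot (by omega),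
      show ℓ - (s + 1) + 1 = ℓ - s by omega, Nat.add_sub_cancel]
    have := hfg (ℓ - (s + 1)) (by omega)
    rw [show ℓ - (s + 1) + 1 = ℓ - s by omega] at this
    have := ih (by omega)
    omega

theorem t_le_sub_add_sum_iff {n ℓ s : ℕ} {t idx : ℕ → ℕ} (hs : s ≤ ℓ)
    (hspread : ∀ k < ℓ, idx k + t k ≤ idx (k + 1)) (hn : idx ℓ ≤ n) :
    t ℓ ≤ n - idx ℓ + ∑ h ∈ Finset.Icc 1 s, (idx (ℓ - (h - 1)) - idx (ℓ - h) - t (ℓ - h)) ↔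
      idx (ℓ - s) + ∑ p ∈ Finset.Icc (ℓ - s) ℓ, t p ≤ n := by
  have htel := sum_Icc_sub_telescope hs hspread
  rw [← Finset.Ico_add_one_right_eq_Icc (ℓ - s) ℓ, Finset.sum_Ico_succ_top (by omega)]
  omega

def shadowMinIndex (n ℓ r : ℕ) (t idx : ℕ → ℕ) (k : ℕ) : ℕ :=
  if k ≤ ℓ - r then idx k else n - ∑ p ∈ Finset.Icc k ℓ, t p

section shadowMinIndex

variable {n d ℓ r : ℕ} {t idx : ℕ → ℕ}

theorem val_map_Icc_shadowMinIndex (hr : r ≤ ℓ) :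
    (Finset.Icc 1 (ℓ - r)).val.map idx + (Finset.Icc 1 (r + 1)).val.map
        (fun h => n - ∑ p ∈ Finset.Icc (ℓ - r + h) ℓ, t p) =
      (Finset.Icc 1 (ℓ + 1)).val.map (shadowMinIndex n ℓ r t idx) := by
  have hsplit : List.range' 1 (ℓ + 1) =
      List.range' 1 (ℓ - r) ++ (List.range' 1 (r + 1)).map (ℓ - r + ·) := by
    rw [List.map_add_range', add_comm (ℓ - r), List.range'_append_1]
    congr 1; omega
  rw [val_map_Icc_one, val_map_Icc_one, val_map_Icc_one, Multiset.coe_add, hsplit,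
    List.map_append, List.map_map]
  congr 2
  · refine List.map_congr_left fun k hk => ?_
    simp only [List.mem_range'_1] at hk
    simp [shadowMinIndex, show k ≤ ℓ - r by omega]
  · refine List.map_congr_left fun h hh => ?_
    simp only [List.mem_range'_1] at hh
    simp [shadowMinIndex, show ¬ ℓ - r + h ≤ ℓ - r by omega]

theorem shadowMinIndex_succ : shadowMinIndex n ℓ r t idx (ℓ + 1) = n := by
  simp [shadowMinIndex]

theorem spreadOn_shadowMinIndex (hidx : SpreadOn t ℓ idx)
    (hjoin : idx (ℓ - r) + ∑ p ∈ Finset.Icc (ℓ - r) ℓ, t p ≤ n)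
    (hn : 1 + ∑ j ∈ Finset.Icc 1 ℓ, t j ≤ n) :
    SpreadOn t (ℓ + 1) (shadowMinIndex n ℓ r t idx) := by
  intro k hk hkℓ
  have hsum := Finset.sum_Icc_eq_add_sum_Icc_succ t (show k ≤ ℓ by omega)
  have hbound : ∑ p ∈ Finset.Icc k ℓ, t p ≤ ∑ p ∈ Finset.Icc 1 ℓ, t p :=
    Finset.sum_le_sum_of_subset (Finset.Icc_subset_Icc_left hk)
  unfold shadowMinIndex
  split_ifs with h₁ h₂ h₂
  · exact hidx k hk (by omega)
  · rw [show k = ℓ - r by omega] at hsum ⊢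
    omega
  · omega
  · omega

theorem shadowMinIndex_mem_Icc (hidx : ∀ k ∈ Finset.Icc 1 ℓ, 1 ≤ idx k ∧ idx k ≤ n)
    (hn : 1 + ∑ j ∈ Finset.Icc 1 ℓ, t j ≤ n) :
    ∀ k ∈ Finset.Icc 1 (ℓ + 1), 1 ≤ shadowMinIndex n ℓ r t idx k ∧
      shadowMinIndex n ℓ r t idx k ≤ n := by
  intro k hk
  simp only [Finset.mem_Icc] at hk
  unfold shadowMinIndex
  split_ifs with h
  · exact hidx k (Finset.mem_Icc.2 ⟨hk.1, by omega⟩)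
  · have : ∑ p ∈ Finset.Icc k ℓ, t p ≤ ∑ p ∈ Finset.Icc 1 ℓ, t p :=
      Finset.sum_le_sum_of_subset (Finset.Icc_subset_Icc_left hk.1)
    omega

theorem map_shadowMinIndex_mem_lexSegment (hℓ : ℓ ≤ d) (hr : r ≤ ℓ)
    (hidx : MonotoneOn idx (Set.Icc 1 ℓ))
    (hc : SpreadOn t (ℓ + 1) (shadowMinIndex n ℓ r t idx))
    (hcbd : ∀ k ∈ Finset.Icc 1 (ℓ + 1), 1 ≤ shadowMinIndex n ℓ r t idx k ∧
      shadowMinIndex n ℓ r t idx k ≤ n)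
    (hdrop : 0 < r → n < idx (ℓ - r + 1) + ∑ p ∈ Finset.Icc (ℓ - r + 1) ℓ, t p) :
    (Finset.Icc 1 ℓ).val.map (shadowMinIndex n ℓ r t idx) ∈
      {v ∈ Mset n d ℓ t | lexGE v ((Finset.Icc 1 ℓ).val.map idx)} := by
  have hcℓ : SpreadOn t ℓ (shadowMinIndex n ℓ r t idx) := fun k hk hkℓ => hc k hk (by omega)
  refine ⟨⟨tSpread_map_Icc hℓ (fun k hk => hcbd k ?_) hcℓ, by simp⟩, ?_⟩
  · simp only [Finset.mem_Icc] at hk ⊢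
    omega
  rcases Nat.eq_zero_or_pos r with rfl | hr0
  · refine Or.inl (Multiset.map_congr rfl fun k hk => ?_)
    simp only [Finset.mem_val, Finset.mem_Icc] at hk
    simp [shadowMinIndex, hk.2]
  · refine lexGE_map_Icc hcℓ.monotoneOn hidx (j := ℓ - r + 1) (by simp; omega)
      (fun k _ hk => by simp [shadowMinIndex, show k ≤ ℓ - r by omega]) ?_
    have hjump := hdrop hr0
    have hpos := (hcbd (ℓ - r + 1) (by simp only [Finset.mem_Icc]; omega)).1
    rw [shadowMinIndex, if_neg (by omega)] at hpos ⊢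
    omega

theorem lexGE_map_shadowMinIndex_of_mem_shad (hidx : MonotoneOn idx (Set.Icc 1 ℓ))
    (hc : MonotoneOn (shadowMinIndex n ℓ r t idx) (Set.Icc 1 (ℓ + 1))) :
    ∀ v ∈ Shad n d t {v ∈ Mset n d ℓ t | lexGE v ((Finset.Icc 1 ℓ).val.map idx)},
      lexGE v ((Finset.Icc 1 (ℓ + 1)).val.map (shadowMinIndex n ℓ r t idx)) := by
  rintro v ⟨w, ⟨⟨-, hwcard⟩, hwu⟩, a, -, -, rfl, hv⟩
  have hcard : Multiset.card (a ::ₘ w) = ℓ + 1 := by simp [hwcard]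
  rw [lexGE_iff_not_lex, sort_map_Icc hc]
  intro hlex
  obtain ⟨j, hjc, hjv, hpre, hlt⟩ := (List.lt_iff_exists.1 (List.lex_lt.1 hlex)).resolve_left
    (by simp [hcard])
  simp only [List.getElem_map, List.getElem_range', one_mul, add_comm 1] at hpre hlt
  simp only [List.length_map, List.length_range'] at hjc
  by_cases hj : j < ℓ - r
  · have hle := getElem_sort_cons_le_of_lexGE hwu (by simp [hwcard]) a (j := j)
      (by simp; omega) fun k hk => by
        rw [← hpre k hk, getElem_sort_map_Icc hidx (by omega), shadowMinIndex,
          if_pos (by omega)]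
    rw [getElem_sort_map_Icc hidx (by omega)] at hle
    rw [shadowMinIndex, if_pos (by omega)] at hlt
    omega
  · have hle := hv.getElem_sort_add_sum_le hcard (j := j) (by omega)
    rw [shadowMinIndex, if_neg (by omega)] at hlt
    omega

end shadowMinIndex

theorem stmt11_general (n d ℓ : ℕ) (t : ℕ → ℕ) (hℓ1 : 1 ≤ ℓ) (hℓ : ℓ < d)
    (ht0 : t 0 = 0)
    (idx : ℕ → ℕ) (hidx0 : idx 0 = 0) (u : Multiset ℕ)
    (hu : u = (Finset.Icc 1 ℓ).val.map idx)
    (hmono : ∀ k, 1 ≤ k → k < ℓ → idx k + t k ≤ idx (k + 1))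
    (huM : u ∈ Mset n d ℓ t)
    (hn : 1 + ∑ j ∈ Finset.Icc 1 ℓ, t j ≤ n)
    (r : ℕ) (hrℓ : r ≤ ℓ)
    (hrC : t ℓ ≤ n - idx ℓ +
      ∑ h ∈ Finset.Icc 1 r, (idx (ℓ - (h - 1)) - idx (ℓ - h) - t (ℓ - h)))
    (hrmin : ∀ s < r, ¬ (t ℓ ≤ n - idx ℓ +
      ∑ h ∈ Finset.Icc 1 s, (idx (ℓ - (h - 1)) - idx (ℓ - h) - t (ℓ - h))))
    (ut : Multiset ℕ)
    (hut : ut = ((Finset.Icc 1 (ℓ - r)).val.map idx) +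
      ((Finset.Icc 1 (r + 1)).val.map
        (fun h => n - ∑ p ∈ Finset.Icc (ℓ - r + h) ℓ, t p))) :
    ut ∈ Shad n d t {v ∈ Mset n d ℓ t | lexGE v u} ∧
      ∀ v ∈ Shad n d t {v ∈ Mset n d ℓ t | lexGE v u}, lexGE v ut := by
  subst hu hut
  have hidx_bd : ∀ k ∈ Finset.Icc 1 ℓ, 1 ≤ idx k ∧ idx k ≤ n := fun k hk =>
    huM.1.2.1 _ (Multiset.mem_map_of_mem idx hk)
  have hspread : ∀ k < ℓ, idx k + t k ≤ idx (k + 1) := by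
    rintro (_ | k) hk
    · simp [hidx0, ht0]
    · exact hmono (k + 1) (by omega) hk
  have hidxℓ : idx ℓ ≤ n := (hidx_bd ℓ (by simp [hℓ1])).2
  have hjoin := (t_le_sub_add_sum_iff hrℓ hspread hidxℓ).1 hrC
  have hdrop : 0 < r → n < idx (ℓ - r + 1) + ∑ p ∈ Finset.Icc (ℓ - r + 1) ℓ, t p := fun hr => by
    have := mt (t_le_sub_add_sum_iff (s := r - 1) (by omega) hspread hidxℓ).2 (hrmin _ (by omega))
    rwa [show ℓ - (r - 1) = ℓ - r + 1 by omega, not_le] at this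
  have hc := spreadOn_shadowMinIndex (r := r) hmono hjoin hn
  have hcbd := shadowMinIndex_mem_Icc (r := r) hidx_bd hn
  have hidx_mono : MonotoneOn idx (Set.Icc 1 ℓ) := SpreadOn.monotoneOn hmono
  rw [val_map_Icc_shadowMinIndex hrℓ]
  refine ⟨⟨_, map_shadowMinIndex_mem_lexSegment hℓ.le hrℓ hidx_mono hc hcbd hdrop, n, by omega,
    le_rfl, ?_, tSpread_map_Icc hℓ hcbd hc⟩,
    lexGE_map_shadowMinIndex_of_mem_shad hidx_mono hc.monotoneOn⟩
  rw [val_map_Icc_succ, shadowMinIndex_succ]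

/-- the lex-minimal element of `Shad_t(L)` for the t-spread lex set
`L = L_t^i(u)`, `u = x_{i_1}⋯x_{i_ℓ}`, is
`ũ = (∏_{h=1}^{ℓ-r} x_{i_h})·(∏_{h=1}^{r+1} x_{n - Σ_{p=ℓ-(r-h)}^{ℓ} t_p})` with
`r = min{s ∈ [0,ℓ] : n - i_ℓ + Σ_{h=1}^{s}(i_{ℓ-(h-1)} - i_{ℓ-h} - t_{ℓ-h}) ≥ t_ℓ}`
(conventions `i_0 = t_0 = 0`). -/
theorem stmt11 (n d ℓ : ℕ) (t : ℕ → ℕ) (hd : 2 ≤ d) (hℓ1 : 1 ≤ ℓ) (hℓ : ℓ < d)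
    (ht0 : t 0 = 0)
    (idx : ℕ → ℕ) (hidx0 : idx 0 = 0) (u : Multiset ℕ)
    (hu : u = (Finset.Icc 1 ℓ).val.map idx)
    (hmono : ∀ k, 1 ≤ k → k < ℓ → idx k + t k ≤ idx (k + 1))
    (huM : u ∈ Mset n d ℓ t)
    (hn : 1 + ∑ j ∈ Finset.Icc 1 ℓ, t j ≤ n)
    (r : ℕ) (hrℓ : r ≤ ℓ)
    (hrC : t ℓ ≤ n - idx ℓ +
      ∑ h ∈ Finset.Icc 1 r, (idx (ℓ - (h - 1)) - idx (ℓ - h) - t (ℓ - h)))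
    (hrmin : ∀ s < r, ¬ (t ℓ ≤ n - idx ℓ +
      ∑ h ∈ Finset.Icc 1 s, (idx (ℓ - (h - 1)) - idx (ℓ - h) - t (ℓ - h))))
    (ut : Multiset ℕ)
    (hut : ut = ((Finset.Icc 1 (ℓ - r)).val.map idx) +
      ((Finset.Icc 1 (r + 1)).val.map
        (fun h => n - ∑ p ∈ Finset.Icc (ℓ - r + h) ℓ, t p))) :
    ut ∈ Shad n d t {v ∈ Mset n d ℓ t | lexGE v u} ∧
      ∀ v ∈ Shad n d t {v ∈ Mset n d ℓ t | lexGE v u}, lexGE v ut :=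
  stmt11_general n d ℓ t hℓ1 hℓ ht0 idx hidx0 u hu hmono huM hn r hrℓ hrC hrmin ut hut
end

section
/- Let u ∈ M_{n,ℓ,t} with ℓ < d and let a = |M_{n,ℓ,t} \ L_t^i(u)|. Then |M_{n,ℓ+1,t} \ Shad_t(L_t^i(u))| = a^{(n,ℓ,t)}, where a^{(n,ℓ,t)} = Σ_{j=p+1}^{ℓ+1} C(a_{j-1} + 1 - t_ℓ, j) and a = Σ_{j=p}^{ℓ} C(a_j, j) is the Macaulay expansion of a with respect to ℓ. -/
open Multiset Finset

/-!
Write the indices of `u` in increasing order as `u_0 ≤ ⋯ ≤ u_{ℓ-1}`. A monomial of degree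
`m ≥ ℓ` whose first `ℓ` indices come lexicographically after those of `u` is determined by the
first position `q` where they differ and an arbitrary t-spread tail starting above `u_q`.
Counting the tails with the hockey-stick identity gives `∑_{j=1}^{ℓ} C(b_j, j)` in degree `ℓ` and
`∑_{j=1}^{ℓ} C(b_j + 1 - t_ℓ, j + 1)` in degree `ℓ + 1`, with `b_1 < ⋯ < b_ℓ`. The first set is
the complement of the lex segment, and the second the complement of its shadow, since dropping
the largest index of a monomial gives its lex-largest divisor. Finally the representation
`a = ∑_{j=1}^{ℓ} C(b_j, j)` with strictly increasing `b` is unique, so `b` is the Macaulay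
expansion of `a` padded by `b_j = j - 1` below `p`.
-/

theorem Finset.sum_range_eq_sum_Icc_sub {M : Type*} [AddCommMonoid M] (f : ℕ → M) (ℓ : ℕ) :
    ∑ q ∈ Finset.range ℓ, f q = ∑ j ∈ Finset.Icc 1 ℓ, f (ℓ - j) := by
  rw [← Finset.Ico_add_one_right_eq_Icc, Finset.sum_Ico_reflect f 1 le_rfl, Finset.range_eq_Ico]
  simp

namespace Nat

theorem sum_Ico_choose_tsub_add_choose {r : ℕ} (hr : 0 < r) (K s : ℕ) {N : ℕ} (hsN : s ≤ N) :
    ∑ x ∈ Finset.Ico s N, (K - x).choose r + (K + 1 - N).choose (r + 1) =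
      (K + 1 - s).choose (r + 1) := by
  induction N, hsN using Nat.le_induction with
  | base => simp
  | succ N hsN ih =>
    rw [Finset.sum_Ico_succ_top hsN, ← ih, add_assoc, Nat.add_sub_add_right]
    congr 1
    rcases le_or_gt N K with hNK | hKN
    · rw [show K + 1 - N = K - N + 1 by omega, choose_succ_succ']
    · simp [show K - N = 0 by omega, show K + 1 - N = 0 by omega, choose_eq_zero_of_lt hr]

theorem sum_choose_lt_choose_succ {b : ℕ → ℕ} :
    ∀ {ℓ : ℕ}, StrictMonoOn b (Set.Icc 1 ℓ) →
      ∑ j ∈ Finset.Icc 1 ℓ, (b j).choose j < (b ℓ + 1).choose ℓ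
  | 0, _ => by simp
  | ℓ + 1, hb => by
    have ih := sum_choose_lt_choose_succ (hb.mono (Set.Icc_subset_Icc_right ℓ.le_succ))
    have hstep : (b ℓ + 1).choose ℓ ≤ (b (ℓ + 1)).choose ℓ := by
      rcases ℓ.eq_zero_or_pos with rfl | hℓ
      · simp
      · exact choose_le_choose ℓ (hb ⟨hℓ, ℓ.le_succ⟩ ⟨Nat.le_add_left 1 ℓ, le_rfl⟩ ℓ.lt_succ_self)
    rw [Finset.sum_Icc_succ_top (by omega), choose_succ_succ' (b (ℓ + 1))]
    omega

/-- The top coefficient `b_ℓ` is recovered as the largest `x` with `C(x, ℓ) ≤ ∑_j C(b_j, j)`,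
by `sum_choose_lt_choose_succ`. -/
theorem eqOn_of_sum_choose_eq {b b' : ℕ → ℕ} :
    ∀ {ℓ : ℕ}, StrictMonoOn b (Set.Icc 1 ℓ) → StrictMonoOn b' (Set.Icc 1 ℓ) →
      ∑ j ∈ Finset.Icc 1 ℓ, (b j).choose j = ∑ j ∈ Finset.Icc 1 ℓ, (b' j).choose j →
      Set.EqOn b b' (Set.Icc 1 ℓ)
  | 0, _, _, _ => fun j hj => absurd hj.2 (by have := hj.1; omega)
  | ℓ + 1, hb, hb', hsum => by
    have hsub : Set.Icc 1 ℓ ⊆ Set.Icc 1 (ℓ + 1) := Set.Icc_subset_Icc_right ℓ.le_succ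
    have hsplit := Finset.sum_Icc_succ_top (M := ℕ) (a := 1) (b := ℓ) (by omega)
    have hlt := sum_choose_lt_choose_succ hb
    have hlt' := sum_choose_lt_choose_succ hb'
    rw [hsplit, hsplit] at hsum
    rw [hsplit] at hlt hlt'
    have htop : b (ℓ + 1) = b' (ℓ + 1) := by
      apply le_antisymm
      · by_contra! h
        have := choose_le_choose (ℓ + 1) (show b' (ℓ + 1) + 1 ≤ b (ℓ + 1) from h)
        omega
      · by_contra! h
        have := choose_le_choose (ℓ + 1) (show b (ℓ + 1) + 1 ≤ b' (ℓ + 1) from h)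
        omega
    have hlow := eqOn_of_sum_choose_eq (hb.mono hsub) (hb'.mono hsub) (by rw [htop] at hsum; omega)
    intro j hj
    rcases (show j ≤ ℓ ∨ j = ℓ + 1 by have := hj.2; omega) with hjℓ | rfl
    · exact hlow ⟨hj.1, hjℓ⟩
    · exact htop

/-- Pads a Macaulay expansion `∑_{j=p}^{ℓ} C(c_j, j)` with zero terms `C(j - 1, j)` below `p`. -/
def padCoeffs (p : ℕ) (c : ℕ → ℕ) (j : ℕ) : ℕ := if j < p then j - 1 else c j

theorem strictMonoOn_padCoeffs {ℓ p : ℕ} {c : ℕ → ℕ} (hcp : p ≤ c p)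
    (hc : StrictMonoOn c (Set.Icc p ℓ)) : StrictMonoOn (padCoeffs p c) (Set.Icc 1 ℓ) := by
  rintro j ⟨hj1, -⟩ k ⟨-, hkℓ⟩ hjk
  simp only [padCoeffs]
  split_ifs with hjp hkp hkp
  · omega
  · have : c p ≤ c k := hc.monotoneOn ⟨le_rfl, by omega⟩ ⟨by omega, hkℓ⟩ (by omega)
    omega
  · omega
  · exact hc ⟨by omega, by omega⟩ ⟨by omega, hkℓ⟩ hjk

theorem sum_Icc_padCoeffs {ℓ p : ℕ} (hp : 1 ≤ p) (c : ℕ → ℕ) (F : ℕ → ℕ → ℕ)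
    (hF : ∀ j, 0 < j → F (j - 1) j = 0) :
    ∑ j ∈ Finset.Icc 1 ℓ, F (padCoeffs p c j) j = ∑ j ∈ Finset.Icc p ℓ, F (c j) j := by
  symm
  refine Finset.sum_subset_zero_on_sdiff (Finset.Icc_subset_Icc_left hp) ?_ ?_
  · intro j hj
    simp only [Finset.mem_sdiff, Finset.mem_Icc] at hj
    simp [padCoeffs, show j < p by omega, hF j (by omega)]
  · intro j hj
    simp [padCoeffs, show ¬ j < p by simp at hj; omega]

end Nat

namespace List

theorem cons_take_le_take {a : ℕ} {l : List ℕ} (hl : (a :: l).Pairwise (· ≤ ·)) {k : ℕ}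
    (hk : k ≤ l.length) : (a :: l).take k ≤ l.take k := by
  induction l generalizing a k with
  | nil => simp_all
  | cons b l ih =>
    cases k with
    | zero => simp
    | succ k =>
      have hab : a ≤ b := List.rel_of_pairwise_cons hl (List.mem_cons_self)
      rw [take_succ_cons, take_succ_cons]
      rcases hab.lt_or_eq with hab | rfl
      · exact le_of_lt (Lex.rel hab)
      · exact cons_le_cons a (ih hl.of_cons (by simpa using hk))

theorem take_length_le_of_sublist {l w : List ℕ} (hl : l.Pairwise (· ≤ ·)) (hwl : w <+ l) :
    l.take w.length ≤ w := by
  induction hwl with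
  | slnil => exact le_rfl
  | cons a hwl ih => exact (cons_take_le_take hl hwl.length_le).trans (ih hl.of_cons)
  | cons_cons a _ ih => exact cons_le_cons a (ih hl.of_cons)

end List

section SpreadLists

variable (n : ℕ) (t : ℕ → ℕ)

/-- `IsSpread n t s i l`: `l` lists the indices of a monomial in increasing order, all in `[s, n]`,
the `k`-th consecutive gap being at least `t (i + k)`. -/
def IsSpread : ℕ → ℕ → List ℕ → Prop
  | _, _, [] => True
  | s, i, x :: l => s ≤ x ∧ x ≤ n ∧ IsSpread (x + t i) (i + 1) l

def spreadLists : ℕ → ℕ → ℕ → Finset (List ℕ)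
  | 0, _, _ => {[]}
  | r + 1, s, i =>
    (Finset.Icc s n).biUnion fun x => (spreadLists r (x + t i) (i + 1)).image (x :: ·)

variable {n t}

theorem IsSpread.le_of_mem {s i : ℕ} {l : List ℕ} (h : IsSpread n t s i l) {x : ℕ}
    (hx : x ∈ l) : s ≤ x := by
  induction l generalizing s i with
  | nil => cases hx
  | cons y l ih =>
    rcases List.mem_cons.1 hx with rfl | hx
    · exact h.1
    · exact h.1.trans ((Nat.le_add_right _ _).trans (ih h.2.2 hx))

theorem IsSpread.pairwise {s i : ℕ} {l : List ℕ} (h : IsSpread n t s i l) :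
    l.Pairwise (· ≤ ·) := by
  induction l generalizing s i with
  | nil => exact List.Pairwise.nil
  | cons y l ih =>
    exact List.pairwise_cons.2
      ⟨fun z hz => (Nat.le_add_right _ _).trans (h.2.2.le_of_mem hz), ih h.2.2⟩

theorem IsSpread.take {s i : ℕ} {l : List ℕ} (h : IsSpread n t s i l) (k : ℕ) :
    IsSpread n t s i (l.take k) := by
  induction l generalizing s i k with
  | nil => simp [IsSpread]
  | cons y l ih =>
    cases k with
    | zero => trivial
    | succ k => exact ⟨h.1, h.2.1, ih h.2.2 k⟩

theorem IsSpread.getD_add_sum_le {s i : ℕ} {l : List ℕ} (h : IsSpread n t s i l) {q : ℕ}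
    (hq : q < l.length) :
    l.getD q 0 + ∑ k ∈ Finset.Ico (q + i) (l.length - 1 + i), t k ≤ n := by
  induction l generalizing s i q with
  | nil => simp at hq
  | cons x l ih =>
    cases q with
    | zero =>
      cases l with
      | nil => simpa using h.2.1
      | cons y l =>
        have hy := ih h.2.2 (q := 0) (by simp)
        have hxy : x + t i ≤ y := h.2.2.1
        simp only [List.getD_cons_zero, List.length_cons, zero_add] at hy ⊢
        rw [show l.length + 1 - 1 + (i + 1) = l.length + 1 + 1 - 1 + i by omega] at hy
        rw [Finset.sum_eq_sum_Ico_succ_bot (by omega)]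
        omega
    | succ q =>
      simp only [List.length_cons, add_lt_add_iff_right] at hq
      have hq' := ih h.2.2 hq
      simp only [List.getD_cons_succ, List.length_cons]
      rwa [show q + 1 + i = q + (i + 1) by omega,
        show l.length + 1 - 1 + i = l.length - 1 + (i + 1) by omega]

theorem isSpread_iff_of_pairwise {s i : ℕ} {l : List ℕ} (hl : l.Pairwise (· ≤ ·)) :
    IsSpread n t s i l ↔ (∀ x ∈ l, s ≤ x ∧ x ≤ n) ∧
      ∀ k, k + 1 < l.length → l.getD k 0 + t (k + i) ≤ l.getD (k + 1) 0 := by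
  induction l generalizing s i with
  | nil => simp [IsSpread]
  | cons x l ih =>
    rw [List.pairwise_cons] at hl
    simp only [IsSpread, ih hl.2, List.mem_cons, forall_eq_or_imp, List.length_cons]
    constructor
    · rintro ⟨hsx, hxn, hl', hgap⟩
      refine ⟨⟨⟨hsx, hxn⟩, fun y hy => ⟨?_, (hl' y hy).2⟩⟩, ?_⟩
      · exact hsx.trans ((Nat.le_add_right x (t i)).trans (hl' y hy).1)
      rintro (_ | k) hk
      · cases l with
        | nil => simp at hk
        | cons y l => simpa using (hl' y List.mem_cons_self).1
      · simpa [Nat.add_right_comm k 1 i, Nat.add_assoc] using hgap k (by omega)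
    · rintro ⟨⟨⟨hsx, hxn⟩, hl'⟩, hgap⟩
      refine ⟨hsx, hxn, fun y hy => ⟨?_, (hl' y hy).2⟩, fun k hk => ?_⟩
      · cases l with
        | nil => cases hy
        | cons z l =>
          have hz := hgap 0 (by simp)
          simp only [List.getD_cons_zero, List.getD_cons_succ, zero_add] at hz
          rcases List.mem_cons.1 hy with rfl | hy
          · exact hz
          · exact hz.trans (List.rel_of_pairwise_cons hl.2 hy)
      · simpa [Nat.add_right_comm k 1 i, Nat.add_assoc] using hgap (k + 1) (by omega)

theorem mem_spreadLists {r s i : ℕ} {l : List ℕ} :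
    l ∈ spreadLists n t r s i ↔ IsSpread n t s i l ∧ l.length = r := by
  induction r generalizing s i l with
  | zero => cases l <;> simp [spreadLists, IsSpread]
  | succ r ih =>
    cases l with
    | nil => simp [spreadLists]
    | cons y l => simp [spreadLists, IsSpread, ih, and_assoc]

end SpreadLists

section Counting

variable {n : ℕ} {t : ℕ → ℕ}

theorem card_spreadLists (r : ℕ) {s i : ℕ} :
    (spreadLists n t r s i).card =
      (n + r - (s + ∑ k ∈ Finset.Ico i (i + r - 1), t k)).choose r := by
  induction r generalizing s i with
  | zero => simp [spreadLists]
  | succ r ih =>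
    have hcard : (spreadLists n t (r + 1) s i).card =
        ∑ x ∈ Finset.Icc s n, (spreadLists n t r (x + t i) (i + 1)).card := by
      rw [spreadLists, Finset.card_biUnion]
      · exact Finset.sum_congr rfl fun x _ => Finset.card_image_of_injective _ List.cons_injective
      · intro x _ y _ hxy
        simp only [Function.onFun, Finset.disjoint_left, Finset.mem_image]
        rintro _ ⟨l, -, rfl⟩ ⟨l', -, h⟩
        exact hxy (List.cons.inj h).1.symm
    rw [hcard]
    rcases r.eq_zero_or_pos with rfl | hr
    · simp [ih]
    have hT : ∑ k ∈ Finset.Ico i (i + r), t k = t i + ∑ k ∈ Finset.Ico (i + 1) (i + r), t k :=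
      Finset.sum_eq_sum_Ico_succ_bot (by omega) t
    have hterm : ∀ x, (spreadLists n t r (x + t i) (i + 1)).card =
        (n + r - ∑ k ∈ Finset.Ico i (i + r), t k - x).choose r := by
      intro x
      rw [ih, show i + 1 + r - 1 = i + r by omega]
      congr 1
      omega
    simp only [hterm, show i + (r + 1) - 1 = i + r by omega]
    generalize ∑ k ∈ Finset.Ico i (i + r), t k = T
    rcases le_or_gt s (n + 1) with hs | hs
    · have hockey := Nat.sum_Ico_choose_tsub_add_choose hr (n + r - T) s hs
      rw [Finset.Ico_add_one_right_eq_Icc, Nat.choose_eq_zero_of_lt (by omega), add_zero] at hockey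
      rw [hockey]
      rcases le_or_gt T (n + r) with hTle | hTgt
      · congr 1
        omega
      · rw [Nat.choose_eq_zero_of_lt (by omega), Nat.choose_eq_zero_of_lt (by omega)]
    · rw [Finset.Icc_eq_empty (by omega), Finset.sum_empty, Nat.choose_eq_zero_of_lt (by omega)]

theorem filter_cons_lt_take_spreadLists {x : ℕ} {g : List ℕ} {s i m : ℕ} (hsx : s ≤ x)
    (hxn : x ≤ n) :
    (spreadLists n t (m + 1) s i).filter (fun l => x :: g < l.take (g.length + 1)) =
      spreadLists n t (m + 1) (x + 1) i ∪
        ((spreadLists n t m (x + t i) (i + 1)).filter (fun l => g < l.take g.length)).image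
          (x :: ·) := by
  ext l
  cases l with
  | nil => simp [mem_spreadLists]
  | cons y l =>
    simp only [Finset.mem_filter, Finset.mem_union, Finset.mem_image, mem_spreadLists, IsSpread,
      List.length_cons, List.take_succ_cons, List.cons_lt_cons_iff, List.cons.injEq]
    constructor
    · rintro ⟨⟨⟨hsy, hyn, hl⟩, hlen⟩, hxy | ⟨rfl, hlt⟩⟩
      · exact Or.inl ⟨⟨hxy, hyn, hl⟩, hlen⟩
      · exact Or.inr ⟨l, ⟨⟨hl, by omega⟩, hlt⟩, rfl, rfl⟩
    · rintro (⟨⟨hxy, hyn, hl⟩, hlen⟩ | ⟨l, ⟨⟨hl, hlen⟩, hlt⟩, rfl, rfl⟩)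
      · exact ⟨⟨⟨by omega, hyn, hl⟩, hlen⟩, Or.inl hxy⟩
      · exact ⟨⟨⟨hsx, hxn, hl⟩, by omega⟩, Or.inr ⟨rfl, hlt⟩⟩

/-- Lists lex-above `g` are counted by the position `q` of the first difference: they agree with `g`
before `q` and are free spread lists from position `q` on, starting above `g_q`. -/
theorem card_filter_lt_take_spreadLists (g : List ℕ) {s i m : ℕ} (hg : IsSpread n t s i g)
    (hgm : g.length ≤ m) :
    ((spreadLists n t m s i).filter (fun l => g < l.take g.length)).card =
      ∑ q ∈ Finset.range g.length,
        (n + (m - q) - (g.getD q 0 + 1 + ∑ k ∈ Finset.Ico (i + q) (i + m - 1), t k)).choose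
          (m - q) := by
  induction g generalizing s i m with
  | nil => simp
  | cons x g ih =>
    obtain ⟨hsx, hxn, hg⟩ := hg
    obtain ⟨m, rfl⟩ : ∃ m', m = m' + 1 := ⟨m - 1, by simp at hgm; omega⟩
    rw [List.length_cons, filter_cons_lt_take_spreadLists hsx hxn, Finset.card_union_of_disjoint,
      Finset.card_image_of_injective _ List.cons_injective, ih hg (by simpa using hgm),
      card_spreadLists, Finset.sum_range_succ', add_comm]
    · congr 1
      · refine Finset.sum_congr rfl fun q _ => ?_
        rw [show i + 1 + q = i + (q + 1) by omega, show i + 1 + m - 1 = i + (m + 1) - 1 by omega]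
        simp
    · rw [Finset.disjoint_left]
      rintro _ hl hl'
      obtain ⟨l, -, rfl⟩ := Finset.mem_image.1 hl'
      exact absurd ((mem_spreadLists.1 hl).1.1) (by omega)

end Counting

section Monomials

variable {n d ℓ m : ℕ} {t : ℕ → ℕ}

theorem sort_coe_of_pairwise {l : List ℕ} (hl : l.Pairwise (· ≤ ·)) :
    (l : Multiset ℕ).sort (· ≤ ·) = l := by
  rw [Multiset.coe_sort, List.mergeSort_eq_self]
  simpa using hl

theorem lexGE_iff_sort_le {u v : Multiset ℕ} :
    lexGE v u ↔ v.sort (· ≤ ·) ≤ u.sort (· ≤ ·) := by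
  rw [lexGE, le_iff_eq_or_lt]
  refine or_congr ⟨congrArg _, fun h => ?_⟩ Iff.rfl
  rw [← Multiset.sort_eq v (· ≤ ·), h, Multiset.sort_eq]

theorem mem_Mset_iff (hm : m ≤ d) {v : Multiset ℕ} :
    v ∈ Mset n d m t ↔ v.sort (· ≤ ·) ∈ spreadLists n t m 1 1 := by
  rw [mem_spreadLists, isSpread_iff_of_pairwise (Multiset.pairwise_sort v _), Mset,
    Set.mem_ofPred_eq, TSpread, Multiset.length_sort]
  simp only [Multiset.mem_sort]
  constructor
  · rintro ⟨⟨-, hmem, hgap⟩, rfl⟩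
    exact ⟨⟨hmem, hgap⟩, rfl⟩
  · rintro ⟨⟨hmem, hgap⟩, rfl⟩
    exact ⟨⟨hm, hmem, hgap⟩, rfl⟩

theorem ncard_sep_Mset (hm : m ≤ d) (P : List ℕ → Prop) [DecidablePred P] :
    {v ∈ Mset n d m t | P (v.sort (· ≤ ·))}.ncard =
      ((spreadLists n t m 1 1).filter P).card := by
  have hsorted : ∀ l ∈ spreadLists n t m 1 1, l.Pairwise (· ≤ ·) :=
    fun l hl => (mem_spreadLists.1 hl).1.pairwise
  have himage : {v ∈ Mset n d m t | P (v.sort (· ≤ ·))} =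
      (fun l : List ℕ => (l : Multiset ℕ)) ''
        ((spreadLists n t m 1 1).filter P : Set (List ℕ)) := by
    ext v
    simp only [Set.mem_image, Finset.coe_filter, Set.mem_ofPred_eq, mem_Mset_iff hm]
    constructor
    · rintro ⟨hv, hP⟩
      exact ⟨_, ⟨hv, hP⟩, Multiset.sort_eq v _⟩
    · rintro ⟨l, ⟨hl, hP⟩, rfl⟩
      rw [sort_coe_of_pairwise (hsorted l hl)]
      exact ⟨hl, hP⟩
  rw [himage, Set.InjOn.ncard_image, Set.ncard_coe_finset]
  intro l₁ h₁ l₂ h₂ (h : (l₁ : Multiset ℕ) = l₂)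
  rw [← sort_coe_of_pairwise (hsorted l₁ (Finset.mem_filter.1 h₁).1),
    ← sort_coe_of_pairwise (hsorted l₂ (Finset.mem_filter.1 h₂).1), h]

theorem Mset_diff_lexGE (u : Multiset ℕ) :
    Mset n d ℓ t \ {v ∈ Mset n d ℓ t | lexGE v u} =
      {v ∈ Mset n d ℓ t | u.sort (· ≤ ·) < (v.sort (· ≤ ·)).take ℓ} := by
  ext v
  simp only [Set.mem_sdiff, Set.mem_sep_iff, lexGE_iff_sort_le, not_and, not_le]
  constructor
  · rintro ⟨hv, hlt⟩
    rw [List.take_of_length_le (by rw [Multiset.length_sort, hv.2])]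
    exact ⟨hv, hlt hv⟩
  · rintro ⟨hv, hlt⟩
    rw [List.take_of_length_le (by rw [Multiset.length_sort, hv.2])] at hlt
    exact ⟨hv, fun _ => hlt⟩

/-- Among the monomials `z / x_i`, the one obtained by removing the largest index is lex-largest,
so `z` lies in the shadow of a lex segment iff its first `ℓ` indices do. -/
theorem Mset_diff_Shad (hℓ : ℓ < d) (u : Multiset ℕ) :
    Mset n d (ℓ + 1) t \ Shad n d t {v ∈ Mset n d ℓ t | lexGE v u} =
      {z ∈ Mset n d (ℓ + 1) t | u.sort (· ≤ ·) < (z.sort (· ≤ ·)).take ℓ} := by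
  ext z
  simp only [Set.mem_sdiff, Shad, Set.mem_ofPred_eq]
  refine and_congr_right fun hz => ⟨fun hns => ?_, ?_⟩
  · by_contra! hle
    have hlen : (z.sort (· ≤ ·)).length = ℓ + 1 := by rw [Multiset.length_sort, hz.2]
    obtain ⟨x, hx⟩ := Multiset.card_eq_one.1
      (show Multiset.card ((z.sort (· ≤ ·)).drop ℓ : Multiset ℕ) = 1 by simp [hlen])
    have hzx : z = x ::ₘ ((z.sort (· ≤ ·)).take ℓ : Multiset ℕ) := by
      rw [← Multiset.singleton_add, ← hx, add_comm, Multiset.coe_add, List.take_append_drop,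
        Multiset.sort_eq]
    have hspread := (mem_spreadLists.1 ((mem_Mset_iff hℓ).1 hz)).1
    have htake_sorted := (hspread.take ℓ).pairwise
    refine hns ⟨((z.sort (· ≤ ·)).take ℓ : Multiset ℕ),
      ⟨(mem_Mset_iff hℓ.le).2 ?_, ?_⟩, x, ?_⟩
    · rw [sort_coe_of_pairwise htake_sorted, mem_spreadLists]
      exact ⟨hspread.take ℓ, by simp [hlen]⟩
    · rwa [lexGE_iff_sort_le, sort_coe_of_pairwise htake_sorted]
    · have := hz.1.2.1 x (by rw [hzx]; exact Multiset.mem_cons_self _ _)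
      exact ⟨this.1, this.2, hzx, hz.1⟩
  · rintro hlt ⟨w, ⟨hw, hwu⟩, x, -, -, rfl, -⟩
    have hsub : (w.sort (· ≤ ·)).Sublist ((x ::ₘ w).sort (· ≤ ·)) := by
      refine List.sublist_of_subperm_of_pairwise ?_ (Multiset.pairwise_sort _ _)
        (Multiset.pairwise_sort _ _)
      rw [← Multiset.coe_le, Multiset.sort_eq, Multiset.sort_eq]
      exact Multiset.le_cons_self w x
    have hle := List.take_length_le_of_sublist (Multiset.pairwise_sort _ _) hsub
    rw [Multiset.length_sort, hw.2] at hle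
    exact absurd (hlt.trans_le (hle.trans (lexGE_iff_sort_le.1 hwu))) (lt_irrefl _)

end Monomials

section LexSegment

variable {n d ℓ m : ℕ} {t : ℕ → ℕ}

/-- `C(lexCoeff j, j)` counts the monomials whose sorted indices first exceed `us` at position
`ℓ - j`. -/
def lexCoeff (n ℓ : ℕ) (t : ℕ → ℕ) (us : List ℕ) (j : ℕ) : ℕ :=
  n + j - (us.getD (ℓ - j) 0 + 1 + ∑ k ∈ Finset.Ico (ℓ - j + 1) ℓ, t k)

theorem lexCoeff_add_eq {us : List ℕ} (hus : us ∈ spreadLists n t ℓ 1 1) {j : ℕ} (hj : 1 ≤ j)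
    (hjℓ : j ≤ ℓ) :
    lexCoeff n ℓ t us j + (us.getD (ℓ - j) 0 + 1 + ∑ k ∈ Finset.Ico (ℓ - j + 1) ℓ, t k) =
      n + j := by
  obtain ⟨hspread, rfl⟩ := mem_spreadLists.1 hus
  have := hspread.getD_add_sum_le (q := us.length - j) (by omega)
  rw [Nat.sub_add_cancel (by omega)] at this
  rw [lexCoeff]
  omega

theorem strictMonoOn_lexCoeff {us : List ℕ} (hus : us ∈ spreadLists n t ℓ 1 1) :
    StrictMonoOn (lexCoeff n ℓ t us) (Set.Icc 1 ℓ) := by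
  refine strictMonoOn_of_lt_add_one Set.ordConnected_Icc fun j _ ⟨hj, _⟩ ⟨_, hjℓ⟩ => ?_
  obtain ⟨hspread, hlen⟩ := mem_spreadLists.1 hus
  obtain ⟨q, hq⟩ : ∃ q, ℓ - j = q + 1 := ⟨ℓ - j - 1, by omega⟩
  have hgap := ((isSpread_iff_of_pairwise hspread.pairwise).1 hspread).2 q (by omega)
  have hsplit : ∑ k ∈ Finset.Ico (q + 1) ℓ, t k =
      t (q + 1) + ∑ k ∈ Finset.Ico (q + 1 + 1) ℓ, t k :=
    Finset.sum_eq_sum_Ico_succ_bot (by omega) t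
  have hj' := lexCoeff_add_eq hus hj (by omega)
  have hj'' := lexCoeff_add_eq hus (j := j + 1) (by omega) hjℓ
  rw [hq] at hj'
  rw [show ℓ - (j + 1) = q by omega] at hj''
  omega

variable {u : Multiset ℕ}

theorem ncard_sep_Mset_lt_take (hmd : m ≤ d) (hℓm : ℓ ≤ m) (hu : u ∈ Mset n d ℓ t) :
    {z ∈ Mset n d m t | u.sort (· ≤ ·) < (z.sort (· ≤ ·)).take ℓ}.ncard =
      ∑ j ∈ Finset.Icc 1 ℓ, (n + (m - ℓ + j) - ((u.sort (· ≤ ·)).getD (ℓ - j) 0 + 1 +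
        ∑ k ∈ Finset.Ico (ℓ - j + 1) m, t k)).choose (m - ℓ + j) := by
  classical
  obtain ⟨hspread, hlen⟩ := mem_spreadLists.1 ((mem_Mset_iff (hℓm.trans hmd)).1 hu)
  rw [ncard_sep_Mset hmd (fun l => u.sort (· ≤ ·) < l.take ℓ), ← hlen,
    card_filter_lt_take_spreadLists _ hspread (by omega), Finset.sum_range_eq_sum_Icc_sub, hlen]
  refine Finset.sum_congr rfl fun j hj => ?_
  rw [Finset.mem_Icc] at hj
  rw [show m - (ℓ - j) = m - ℓ + j by omega, show 1 + (ℓ - j) = ℓ - j + 1 by omega,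
    show 1 + m - 1 = m by omega]

theorem ncard_Mset_diff_lexGE (hu : u ∈ Mset n d ℓ t) :
    (Mset n d ℓ t \ {v ∈ Mset n d ℓ t | lexGE v u}).ncard =
      ∑ j ∈ Finset.Icc 1 ℓ, (lexCoeff n ℓ t (u.sort (· ≤ ·)) j).choose j := by
  rw [Mset_diff_lexGE, ncard_sep_Mset_lt_take (hu.2 ▸ hu.1.1) le_rfl hu]
  simp [lexCoeff]

theorem ncard_Mset_diff_Shad (hℓ : ℓ < d) (hu : u ∈ Mset n d ℓ t) :
    (Mset n d (ℓ + 1) t \ Shad n d t {v ∈ Mset n d ℓ t | lexGE v u}).ncard =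
      ∑ j ∈ Finset.Icc 1 ℓ,
        (lexCoeff n ℓ t (u.sort (· ≤ ·)) j + 1 - t ℓ).choose (j + 1) := by
  rw [Mset_diff_Shad hℓ, ncard_sep_Mset_lt_take hℓ (Nat.le_succ ℓ) hu]
  refine Finset.sum_congr rfl fun j hj => ?_
  rw [Finset.mem_Icc] at hj
  have := lexCoeff_add_eq ((mem_Mset_iff hℓ.le).1 hu) hj.1 hj.2
  rw [Finset.sum_Ico_succ_top (by omega), show ℓ + 1 - ℓ + j = j + 1 by omega]
  congr 1
  omega

end LexSegment

theorem stmt12_general (n d ℓ : ℕ) (t : ℕ → ℕ) (hℓ : ℓ < d)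
    (u : Multiset ℕ) (huM : u ∈ Mset n d ℓ t)
    (a : ℕ) (ha : a = (Mset n d ℓ t \ {v ∈ Mset n d ℓ t | lexGE v u}).ncard)
    (p : ℕ) (c : ℕ → ℕ) (hp1 : 1 ≤ p)
    (hmono : ∀ j k, p ≤ j → j < k → k ≤ ℓ → c j < c k) (hcp : p ≤ c p)
    (hexp : a = ∑ j ∈ Finset.Icc p ℓ, (c j).choose j) :
    (Mset n d (ℓ + 1) t \ Shad n d t {v ∈ Mset n d ℓ t | lexGE v u}).ncard
      = ∑ j ∈ Finset.Icc (p + 1) (ℓ + 1), (c (j - 1) + 1 - t ℓ).choose j := by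
  have hpad : StrictMonoOn (Nat.padCoeffs p c) (Set.Icc 1 ℓ) :=
    Nat.strictMonoOn_padCoeffs hcp fun j hj k hk hjk => hmono j k hj.1 hjk hk.2
  have hcoeff :
      Set.EqOn (lexCoeff n ℓ t (u.sort (· ≤ ·))) (Nat.padCoeffs p c) (Set.Icc 1 ℓ) := by
    refine Nat.eqOn_of_sum_choose_eq (strictMonoOn_lexCoeff ((mem_Mset_iff hℓ.le).1 huM)) hpad ?_
    rw [← ncard_Mset_diff_lexGE huM, ← ha, hexp,
      Nat.sum_Icc_padCoeffs hp1 c _ fun j hj => Nat.choose_eq_zero_of_lt (by omega)]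
  rw [ncard_Mset_diff_Shad hℓ huM,
    Finset.sum_congr rfl fun j hj => by rw [hcoeff (Finset.mem_Icc.1 hj)],
    Nat.sum_Icc_padCoeffs hp1 c (fun x j => (x + 1 - t ℓ).choose (j + 1))
      fun j hj => Nat.choose_eq_zero_of_lt (by omega),
    ← Finset.map_add_right_Icc, Finset.sum_map]
  simp

/-- with `a = |M_{n,ℓ,t} \ L_t^i(u)|` and `a = Σ_{j=p}^{ℓ} C(c_j, j)`
the Macaulay expansion of `a` w.r.t. `ℓ`, one has
`|M_{n,ℓ+1,t} \ Shad_t(L_t^i(u))| = a^{(n,ℓ,t)} = Σ_{j=p+1}^{ℓ+1} C(c_{j-1} + 1 - t_ℓ, j)`. -/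
theorem stmt12 (n d ℓ : ℕ) (t : ℕ → ℕ) (hd : 2 ≤ d) (hℓ1 : 1 ≤ ℓ) (hℓ : ℓ < d)
    (hn : ∑ j ∈ Finset.Icc 1 (d - 1), t j < n)
    (u : Multiset ℕ) (huM : u ∈ Mset n d ℓ t)
    (a : ℕ) (ha : a = (Mset n d ℓ t \ {v ∈ Mset n d ℓ t | lexGE v u}).ncard)
    (p : ℕ) (c : ℕ → ℕ) (hp1 : 1 ≤ p) (hpℓ : p ≤ ℓ)
    (hmono : ∀ j k, p ≤ j → j < k → k ≤ ℓ → c j < c k) (hcp : p ≤ c p)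
    (hexp : a = ∑ j ∈ Finset.Icc p ℓ, (c j).choose j) :
    (Mset n d (ℓ + 1) t \ Shad n d t {v ∈ Mset n d ℓ t | lexGE v u}).ncard
      = ∑ j ∈ Finset.Icc (p + 1) (ℓ + 1), (c (j - 1) + 1 - t ℓ).choose j :=
  stmt12_general n d ℓ t hℓ u huM a ha p c hp1 hmono hcp hexp
end
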